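/- arXiv:1308.4427 — 5 statements merged into one kernel-verified Lean document; each statement's English description precedes it below -/
import Mathlib

section
/- In H_{p,q}, the element θ = (1 - pq)yx - z is normal: it satisfies θz = zθ, θx = qxθ, and θy = q^{-1}yθ. -/
/-- In `H_{p,q}`, the element `θ = (1-pq)yx - z` is normal:
`θz = zθ`, `θx = q xθ`, `θy = q⁻¹ yθ`. -/
theorem Hpq_theta_normal {k A : Type*} [Field k] [Ring A] [Algebra k A]
    (p q : k) (hp : p ≠ 0) (hq : q ≠ 0) (x y z : A)
    (hzx : z * x = p⁻¹ • (x * z)) (hzy : z * y = p • (y * z))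
    (hyx : y * x = q • (x * y) + z) :
    ((1 - p * q) • (y * x) - z) * z = z * ((1 - p * q) • (y * x) - z) ∧
    ((1 - p * q) • (y * x) - z) * x = q • (x * ((1 - p * q) • (y * x) - z)) ∧
    ((1 - p * q) • (y * x) - z) * y = q⁻¹ • (y * ((1 - p * q) • (y * x) - z)) := by
  have hxz : x * z = p • (z * x) := by
    rw [hzx, smul_smul, mul_inv_cancel₀ hp, one_smul]
  have hyz : y * z = p⁻¹ • (z * y) := by
    rw [hzy, smul_smul, inv_mul_cancel₀ hp, one_smul]
  have hxy : x * y = q⁻¹ • (y * x) - q⁻¹ • z := by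
    rw [hyx, smul_add, smul_smul, inv_mul_cancel₀ hq, one_smul, add_sub_cancel_right]
  -- yx commutes with z
  have hcomm : y * x * z = z * (y * x) := by
    calc y * x * z = y * (x * z) := by rw [mul_assoc]
      _ = p • (y * (z * x)) := by rw [hxz, mul_smul_comm]
      _ = p • ((y * z) * x) := by rw [mul_assoc]
      _ = p • (p⁻¹ • ((z * y) * x)) := by rw [hyz, smul_mul_assoc]
      _ = z * (y * x) := by
          rw [smul_smul, mul_inv_cancel₀ hp, one_smul, mul_assoc]
  refine ⟨?_, ?_, ?_⟩
  · rw [sub_mul, mul_sub, smul_mul_assoc, mul_smul_comm, hcomm]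
  · have hA : y * x * x = q • (x * (y * x)) + z * x := by
      conv_lhs => rw [hyx, add_mul, smul_mul_assoc, mul_assoc]
    rw [sub_mul, smul_mul_assoc, hA, hzx, mul_sub, mul_smul_comm, hxz]
    match_scalars <;> field_simp <;> ring
  · have hB : y * x * y = q⁻¹ • (y * (y * x)) - q⁻¹ • (y * z) := by
      rw [mul_assoc, hxy, mul_sub, mul_smul_comm, mul_smul_comm]
    rw [sub_mul, smul_mul_assoc, hB, hzy, mul_sub, mul_smul_comm]
    match_scalars <;> field_simp <;> ring
end

section
/- In the quantum torus k⟨x^{±1}, z^{±1} | zx = p^{-1}xz⟩ with p not a root of unity, there is no element d such that dx - xd = x^{-1}; i.e., the derivation sending x ↦ x^{-1}, z ↦ 0 is not inner. -/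
/-!
Conjugation by `z` scales `x` by `q`, so `[x^i z^j, x] = (q^j - 1) x^(i+1) z^j`. Hence the
commutator of any element with `x` has zero coefficient on every monomial `x^i z^0`, while `x⁻¹`
is such a monomial.
-/

section QCommute

variable {k A : Type*} [Semifield k] [Semiring A] [Algebra k A] {c : k}

theorem pow_mul_eq_pow_smul_mul_pow {u a : A} (h : u * a = c • (a * u)) (n : ℕ) :
    u ^ n * a = c ^ n • (a * u ^ n) := by
  induction n with
  | zero => simp
  | succ n ih =>
    rw [pow_succ, mul_assoc, h, mul_smul_comm, ← mul_assoc, ih, smul_mul_assoc, smul_smul,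
      mul_assoc, ← pow_succ, ← pow_succ']

theorem Units.inv_mul_eq_inv_smul_mul_inv (hc : c ≠ 0) {u : Aˣ} {a : A}
    (h : (u : A) * a = c • (a * u)) : (↑u⁻¹ : A) * a = c⁻¹ • (a * ↑u⁻¹) := by
  have h' : a * ↑u⁻¹ = c • ((↑u⁻¹ : A) * a) :=
    calc a * ↑u⁻¹ = ↑u⁻¹ * ((u : A) * a) * ↑u⁻¹ := by simp
      _ = c • ((↑u⁻¹ : A) * a) := by
        rw [h, mul_smul_comm, smul_mul_assoc]; simp [mul_assoc]
  rw [h', smul_smul, inv_mul_cancel₀ hc, one_smul]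

theorem Units.zpow_mul_eq_zpow_smul_mul_zpow (hc : c ≠ 0) {u : Aˣ} {a : A}
    (h : (u : A) * a = c • (a * u)) (j : ℤ) :
    ((u ^ j : Aˣ) : A) * a = c ^ j • (a * ((u ^ j : Aˣ) : A)) := by
  cases j with
  | ofNat n => simpa using pow_mul_eq_pow_smul_mul_pow h n
  | negSucc n =>
    have hpow := pow_mul_eq_pow_smul_mul_pow h (n + 1)
    rw [← Units.val_pow_eq_pow_val] at hpow
    simpa [zpow_negSucc] using
      Units.inv_mul_eq_inv_smul_mul_inv (pow_ne_zero (n + 1) hc) hpow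

end QCommute

section QuantumTorus

variable {k A : Type*} [Field k] [Ring A] [Algebra k A] {q : k} {X Z : Aˣ}

theorem monomial_mul_sub_mul_monomial (hq : q ≠ 0) (hrel : (Z : A) * X = q • ((X : A) * Z))
    (i j : ℤ) :
    ((X ^ i : Aˣ) : A) * ((Z ^ j : Aˣ) : A) * X - X * (((X ^ i : Aˣ) : A) * ((Z ^ j : Aˣ) : A))
      = (q ^ j - 1) • (((X ^ (i + 1) : Aˣ) : A) * ((Z ^ j : Aˣ) : A)) := by
  have hright : ((X ^ i : Aˣ) : A) * ((Z ^ j : Aˣ) : A) * X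
      = q ^ j • (((X ^ (i + 1) : Aˣ) : A) * ((Z ^ j : Aˣ) : A)) := by
    rw [mul_assoc, Units.zpow_mul_eq_zpow_smul_mul_zpow hq hrel, mul_smul_comm, ← mul_assoc,
      ← Units.val_mul, ← zpow_add_one]
  have hleft : (X : A) * (((X ^ i : Aˣ) : A) * ((Z ^ j : Aˣ) : A))
      = ((X ^ (i + 1) : Aˣ) : A) * ((Z ^ j : Aˣ) : A) := by
    rw [← mul_assoc, ← Units.val_mul, ← zpow_one_add, add_comm]
  rw [hright, hleft, sub_smul, one_smul]

theorem coord_mul_sub_mul_eq_zero (hq : q ≠ 0) (hrel : (Z : A) * X = q • ((X : A) * Z))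
    (hind : LinearIndependent k (fun ij : ℤ × ℤ => ((X ^ ij.1 : Aˣ) : A) * ((Z ^ ij.2 : Aˣ) : A)))
    (hspan : Submodule.span k
      (Set.range (fun ij : ℤ × ℤ => ((X ^ ij.1 : Aˣ) : A) * ((Z ^ ij.2 : Aˣ) : A))) = ⊤)
    (i : ℤ) (d : A) : (Module.Basis.mk hind hspan.ge).coord (i, 0) (d * X - X * d) = 0 := by
  set B := Module.Basis.mk hind hspan.ge
  let commX : A →ₗ[k] A := LinearMap.mulRight k (X : A) - LinearMap.mulLeft k (X : A)
  suffices h : B.coord (i, 0) ∘ₗ commX = 0 from LinearMap.congr_fun h d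
  refine B.ext fun ⟨i', j⟩ => ?_
  have hcomm : commX (B (i', j)) = (q ^ j - 1) • B (i' + 1, j) := by
    simpa [B, commX] using monomial_mul_sub_mul_monomial hq hrel i' j
  by_cases hj : j = 0
  · rw [LinearMap.comp_apply, hcomm, hj]
    simp
  · simp [hcomm, Module.Basis.coord_apply, hj]

end QuantumTorus

theorem quantum_torus_derivation_not_inner_general {k A : Type*} [Field k] [Ring A] [Algebra k A]
    (q : k) (hq : q ≠ 0)
    (X Z : Aˣ) (hrel : (Z : A) * X = q • ((X : A) * Z))
    (hind : LinearIndependent k (fun ij : ℤ × ℤ => ((X ^ ij.1 : Aˣ) : A) * ((Z ^ ij.2 : Aˣ) : A)))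
    (hspan : Submodule.span k
      (Set.range (fun ij : ℤ × ℤ => ((X ^ ij.1 : Aˣ) : A) * ((Z ^ ij.2 : Aˣ) : A))) = ⊤) :
    ¬ ∃ d : A, d * X - (X : A) * d = ((X⁻¹ : Aˣ) : A) := by
  rintro ⟨d, hd⟩
  have hcoord := coord_mul_sub_mul_eq_zero hq hrel hind hspan (-1) d
  have hXinv : ((X⁻¹ : Aˣ) : A) = Module.Basis.mk hind hspan.ge (-1, 0) := by simp
  rw [hd, hXinv, Module.Basis.coord_apply, Module.Basis.repr_self,
    Finsupp.single_eq_same] at hcoord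
  exact one_ne_zero hcoord

/-- In the quantum torus `k⟨x^{±1}, z^{±1} | zx = q xz⟩` (with `q` not a root of
unity), there is no element `d` with `dx - xd = x⁻¹`; i.e. the derivation sending
`x ↦ x⁻¹`, `z ↦ 0` is not inner. The quantum torus is axiomatized as an algebra
with invertible elements `x, z` satisfying the relation, for which the monomials
`x^i z^j` (`i, j ∈ ℤ`) form a `k`-basis. -/
theorem quantum_torus_derivation_not_inner {k A : Type*} [Field k] [Ring A] [Algebra k A]
    (q : k) (hq : q ≠ 0) (hq' : ∀ n : ℕ, 0 < n → q ^ n ≠ 1)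
    (X Z : Aˣ) (hrel : (Z : A) * X = q • ((X : A) * Z))
    (hind : LinearIndependent k (fun ij : ℤ × ℤ => ((X ^ ij.1 : Aˣ) : A) * ((Z ^ ij.2 : Aˣ) : A)))
    (hspan : Submodule.span k
      (Set.range (fun ij : ℤ × ℤ => ((X ^ ij.1 : Aˣ) : A) * ((Z ^ ij.2 : Aˣ) : A))) = ⊤) :
    ¬ ∃ d : A, d * X - (X : A) * d = ((X⁻¹ : Aˣ) : A) :=
  quantum_torus_derivation_not_inner_general q hq X Z hrel hind hspan
end

section
/- For n = 1 and p not a root of unity, the representation V = k[ξ] of A_p(r,s) given by x·ξ^m = ξ^{m+1}, y·ξ^m = [m]_{p,q} ξ^{m-1}, z^{±1}·ξ^m = p^{∓m} ξ^m, w^{±1}·ξ^m = q^{∓m} ξ^m is irreducible: every nonzero invariant subspace contains 1 and hence equals V. -/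
/-!
Up to the unit `p⁻¹ ^ m`, `[m]_{p,q}` is the geometric sum `Σ_{i<m} (pq)^i`, which can only vanish
if `(pq)^m = 1`; and `(pq)^m = 1` would give `p^{m(r+s)} = 1` via `q^s = p^r`. So `y` lowers the
degree of every nonzero polynomial by exactly one, and iterating it inside a nonzero invariant
subspace produces a nonzero constant. From `1`, the operator `x` generates every monomial.
-/

open Polynomial

/-- The (p,q)-number `[n]_{p,q} = Σ_{i=0}^{n-1} q^i p^{-(n-i)}`. -/
def pqNum {k : Type*} [Field k] (p q : k) (n : ℕ) : k :=
  ∑ i ∈ Finset.range n, q ^ i * p⁻¹ ^ (n - i)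

theorem geom_sum_ne_zero_of_pow_ne_one {R : Type*} [Ring R] {x : R} {n : ℕ} (h : x ^ n ≠ 1) :
    ∑ i ∈ Finset.range n, x ^ i ≠ 0 := fun h0 =>
  h (sub_eq_zero.mp (by rw [← geom_sum_mul, h0, zero_mul]))

theorem mul_pow_ne_one_of_pow_eq_pow {k : Type*} [CommMonoid k] {p q : k}
    (hroot : ∀ m : ℕ, 0 < m → p ^ m ≠ 1) {r s : ℕ} (hs : 0 < s) (hpq : p ^ r = q ^ s)
    {n : ℕ} (hn : 0 < n) : (p * q) ^ n ≠ 1 := by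
  intro h
  have : p ^ (n * (s + r)) = 1 :=
    calc p ^ (n * (s + r)) = (p ^ s * p ^ r) ^ n := by rw [mul_comm, pow_mul, pow_add]
      _ = ((p * q) ^ n) ^ s := by rw [hpq, ← mul_pow, ← pow_mul, ← pow_mul, mul_comm s n]
      _ = 1 := by rw [h, one_pow]
  exact hroot _ (by positivity) this

section pqNum

variable {k : Type*} [Field k]

@[simp]
theorem pqNum_zero (p q : k) : pqNum p q 0 = 0 := by
  simp [pqNum]

variable {p q : k}

theorem pqNum_eq_inv_pow_mul_geom_sum (hp : p ≠ 0) (m : ℕ) :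
    pqNum p q m = p⁻¹ ^ m * ∑ i ∈ Finset.range m, (p * q) ^ i := by
  rw [pqNum, Finset.mul_sum]
  refine Finset.sum_congr rfl fun i hi => ?_
  obtain ⟨j, rfl⟩ := Nat.exists_eq_add_of_le (Finset.mem_range.mp hi).le
  rw [Nat.add_sub_cancel_left, pow_add, mul_pow, inv_pow, inv_pow]
  field_simp

theorem pqNum_ne_zero (hp : p ≠ 0) {m : ℕ} (hm : (p * q) ^ m ≠ 1) : pqNum p q m ≠ 0 := by
  rw [pqNum_eq_inv_pow_mul_geom_sum hp]
  exact mul_ne_zero (pow_ne_zero _ (inv_ne_zero hp)) (geom_sum_ne_zero_of_pow_ne_one hm)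

end pqNum

namespace Polynomial

variable {k : Type*} [Field k] {Y : k[X] →ₗ[k] k[X]} {c : ℕ → k}

theorem coeff_apply_of_apply_X_pow (hY : ∀ m : ℕ, Y (X ^ m) = c m • X ^ (m - 1)) (hc : c 0 = 0)
    (f : k[X]) (j : ℕ) : (Y f).coeff j = c (j + 1) * f.coeff (j + 1) := by
  induction f using Polynomial.induction_on' with
  | add f g hf hg => rw [map_add, coeff_add, hf, hg, coeff_add, mul_add]
  | monomial n a =>
    rw [← C_mul_X_pow_eq_monomial, ← smul_eq_C_mul, map_smul, hY, coeff_smul, coeff_smul,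
      coeff_smul, coeff_X_pow, coeff_X_pow]
    rcases n with _ | n
    · simp [hc]
    · by_cases h : j = n <;> simp [h, mul_comm]

theorem degree_apply_of_apply_X_pow (hY : ∀ m : ℕ, Y (X ^ m) = c m • X ^ (m - 1))
    (hc : c 0 = 0) {f : k[X]} {n : ℕ} (hf : f.degree = ↑(n + 1)) (hcn : c (n + 1) ≠ 0) :
    (Y f).degree = n := by
  refine degree_eq_of_le_of_coeff_ne_zero ?_ ?_
  · refine degree_le_of_natDegree_le ((natDegree_le_iff_coeff_eq_zero).mpr fun j hj => ?_)
    have hlt : f.degree < ↑(j + 1) := by rw [hf]; exact_mod_cast (by omega : n + 1 < j + 1)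
    rw [coeff_apply_of_apply_X_pow hY hc, coeff_eq_zero_of_degree_lt hlt, mul_zero]
  · rw [coeff_apply_of_apply_X_pow hY hc]
    exact mul_ne_zero hcn (coeff_ne_zero_of_eq_degree hf)

theorem one_mem_of_apply_X_pow (hY : ∀ m : ℕ, Y (X ^ m) = c m • X ^ (m - 1)) (hc : c 0 = 0)
    (hc_pos : ∀ m : ℕ, 0 < m → c m ≠ 0) {V : Submodule k k[X]} (hV : ∀ f ∈ V, Y f ∈ V)
    {f : k[X]} (hfV : f ∈ V) (hf : f ≠ 0) : (1 : k[X]) ∈ V := by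
  obtain ⟨n, hn⟩ : ∃ n : ℕ, f.degree = n := ⟨f.natDegree, degree_eq_natDegree hf⟩
  induction n generalizing f with
  | zero =>
    have hf0 : f.coeff 0 ≠ 0 := coeff_ne_zero_of_eq_degree hn
    have hone : (1 : k[X]) = (f.coeff 0)⁻¹ • f := by
      rw [eq_C_of_degree_eq_zero hn, smul_C, coeff_C_zero, smul_eq_mul, inv_mul_cancel₀ hf0,
        C_1]
    exact hone ▸ V.smul_mem _ hfV
  | succ n ih =>
    have hYf := degree_apply_of_apply_X_pow hY hc hn (hc_pos _ n.succ_pos)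
    exact ih (hV f hfV) (ne_zero_of_coe_le_degree hYf.ge) hYf

theorem eq_top_of_one_mem_of_apply_X_pow {Xop : k[X] →ₗ[k] k[X]}
    (hX : ∀ m : ℕ, Xop (X ^ m) = X ^ (m + 1)) {V : Submodule k k[X]} (hV : ∀ f ∈ V, Xop f ∈ V)
    (hone : (1 : k[X]) ∈ V) : V = ⊤ := by
  have hmon : ∀ m : ℕ, (X : k[X]) ^ m ∈ V := by
    intro m
    induction m with
    | zero => rwa [pow_zero]
    | succ m ih => exact hX m ▸ hV _ ih
  refine Submodule.eq_top_iff'.mpr fun f => ?_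
  rw [f.as_sum_range_C_mul_X_pow]
  exact V.sum_mem fun m _ => smul_eq_C_mul (R := k) _ ▸ V.smul_mem _ (hmon m)

end Polynomial

theorem Aprs_rep_irreducible_general {k : Type*} [Field k]
    (p q : k) (hp : p ≠ 0)
    (hroot : ∀ m : ℕ, 0 < m → p ^ m ≠ 1)
    (r s : ℕ) (hs : 0 < s)
    (hpq : p ^ r = q ^ s)
    (Xop Yop Zop Zinv Wop Winv : Polynomial k →ₗ[k] Polynomial k)
    (hX : ∀ m : ℕ, Xop (X ^ m) = X ^ (m + 1))
    (hY : ∀ m : ℕ, Yop (X ^ m) = pqNum p q m • X ^ (m - 1)) :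
    ∀ V : Submodule k (Polynomial k),
      (∀ f ∈ V, Xop f ∈ V ∧ Yop f ∈ V ∧ Zop f ∈ V ∧ Zinv f ∈ V ∧ Wop f ∈ V ∧ Winv f ∈ V) →
      V ≠ ⊥ → V = ⊤ := by
  intro V hV hV_ne
  obtain ⟨f, hfV, hf⟩ := (Submodule.ne_bot_iff V).mp hV_ne
  have hpqNum : ∀ m : ℕ, 0 < m → pqNum p q m ≠ 0 := fun m hm =>
    pqNum_ne_zero hp (mul_pow_ne_one_of_pow_eq_pow hroot hs hpq hm)
  have hone : (1 : k[X]) ∈ V :=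
    one_mem_of_apply_X_pow hY (pqNum_zero p q) hpqNum (fun f hf => (hV f hf).2.1) hfV hf
  exact eq_top_of_one_mem_of_apply_X_pow hX (fun f hf => (hV f hf).1) hone

/-- For `n = 1` and `p` not a root of unity (with `p^r = q^s`, `gcd(r,s) = 1`,
`r, s > 0`), the representation `V = k[ξ]` of `A_p(r,s)` given by `x·ξ^m = ξ^{m+1}`,
`y·ξ^m = [m]_{p,q} ξ^{m-1}`, `z^{±1}·ξ^m = p^{∓m} ξ^m`, `w^{±1}·ξ^m = q^{∓m} ξ^m` is
irreducible: every nonzero invariant subspace equals `V`. -/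
theorem Aprs_rep_irreducible {k : Type*} [Field k]
    (p q : k) (hp : p ≠ 0) (hq : q ≠ 0)
    (hroot : ∀ m : ℕ, 0 < m → p ^ m ≠ 1)
    (r s : ℕ) (hr : 0 < r) (hs : 0 < s) (hgcd : Nat.gcd r s = 1)
    (hpq : p ^ r = q ^ s)
    (Xop Yop Zop Zinv Wop Winv : Polynomial k →ₗ[k] Polynomial k)
    (hX : ∀ m : ℕ, Xop (X ^ m) = X ^ (m + 1))
    (hY : ∀ m : ℕ, Yop (X ^ m) = pqNum p q m • X ^ (m - 1))
    (hZ : ∀ m : ℕ, Zop (X ^ m) = (p ^ m)⁻¹ • X ^ m)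
    (hZinv : ∀ m : ℕ, Zinv (X ^ m) = p ^ m • X ^ m)
    (hW : ∀ m : ℕ, Wop (X ^ m) = (q ^ m)⁻¹ • X ^ m)
    (hWinv : ∀ m : ℕ, Winv (X ^ m) = q ^ m • X ^ m) :
    ∀ V : Submodule k (Polynomial k),
      (∀ f ∈ V, Xop f ∈ V ∧ Yop f ∈ V ∧ Zop f ∈ V ∧ Zinv f ∈ V ∧ Wop f ∈ V ∧ Winv f ∈ V) →
      V ≠ ⊥ → V = ⊤ :=
  Aprs_rep_irreducible_general p q hp hroot r s hs hpq Xop Yop Zop Zinv Wop Winv hX hY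
end

section
/- In the quotient ring Q of A_p(r,s) (equivalently, any ring containing invertible x, z and elements y, w^{±1} satisfying the A_p(r,s) relations), the elements L_n = z^{-1} x^{n+1} y for n ∈ ℤ satisfy the two-parameter Virasoro relations p^{n-m} L_n L_m - q^{m-n} L_m L_n = [m-n]_{p,q} L_{m+n}. -/
/-!
Moving `y` past `z⁻¹` costs a factor `p`, and moving `x^j` past `z^{±1}` a factor `p^{±j}`.
Together with the identity for `y x^{m+1}` this writes `L_n L_m` as a multiple of the normal
word `z⁻² x^{n+m+2} y²` plus `p^{m+1} [m+1]_{p,q} L_{n+m}`. In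
`p^{n-m} L_n L_m - q^{m-n} L_m L_n` the normal words cancel, and the remaining coefficient
`p^{n+1} ([m+1]_{p,q} - q^{m-n} [n+1]_{p,q})` equals `[m-n]_{p,q}`.
-/

section

variable {k A : Type*} [Field k] [Ring A] [Algebra k A]

def QCommute (c : k) (a b : A) : Prop := a * b = c • (b * a)

namespace QCommute

variable {c : k} {a b : A}

theorem symm (hc : c ≠ 0) (h : QCommute c a b) : QCommute c⁻¹ b a := by
  rw [QCommute, h, smul_smul, inv_mul_cancel₀ hc, one_smul]

theorem mul_mul_left (h : QCommute c a b) (w : A) : a * (b * w) = c • (b * (a * w)) := by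
  rw [← mul_assoc, h, smul_mul_assoc, mul_assoc]

theorem swap_units_inv {v : Aˣ} (h : QCommute c (v : A) a) : QCommute c a ↑v⁻¹ := by
  simpa [QCommute, mul_assoc] using congrArg (fun t => (↑v⁻¹ : A) * t * ↑v⁻¹) h

theorem pow_left (h : QCommute c a b) (n : ℕ) : QCommute (c ^ n) (a ^ n) b := by
  induction n with
  | zero => simp [QCommute]
  | succ n ih =>
    rw [QCommute, pow_succ, mul_assoc, h, mul_smul_comm, ← mul_assoc, ih, smul_mul_assoc,
      smul_smul, mul_assoc, pow_succ']

theorem units_zpow_left {u : Aˣ} (hc : c ≠ 0) (h : QCommute c (u : A) a) (j : ℤ) :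
    QCommute (c ^ j) ↑(u ^ j) a := by
  cases j with
  | ofNat n => simpa using h.pow_left n
  | negSucc n =>
    simpa [zpow_negSucc, inv_pow] using (h.swap_units_inv.symm hc).pow_left (n + 1)

end QCommute

def pqNumber (p q : k) (j : ℤ) : k := (q ^ j - p ^ (-j)) / (q - p⁻¹)

def virasoroL (X Z : Aˣ) (y : A) (j : ℤ) : A := ↑Z⁻¹ * ↑(X ^ (j + 1)) * y

variable {p q : k} {X Z : Aˣ} {y : A}

theorem virasoroL_mul_virasoroL (hp : p ≠ 0) (hzx : QCommute p⁻¹ (Z : A) X)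
    (hzy : QCommute p (Z : A) y)
    (hid : ∀ j : ℤ,
      y * ↑(X ^ j) = q ^ j • (↑(X ^ j) * y) + pqNumber p q j • (↑(X ^ (j - 1)) * ↑Z))
    (n m : ℤ) :
    virasoroL X Z y n * virasoroL X Z y m
      = (p ^ (-n) * q ^ (m + 1)) • (↑Z⁻¹ * (↑Z⁻¹ * (↑(X ^ (n + m + 2)) * (y * y))))
        + (p ^ (m + 1) * pqNumber p q (m + 1)) • virasoroL X Z y (n + m) := by
  have hyZ : QCommute p y ↑Z⁻¹ := hzy.swap_units_inv
  have hXZinv := hzx.swap_units_inv.units_zpow_left (inv_ne_zero hp)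
  have hXZ : QCommute p (X : A) Z := by simpa using hzx.symm (inv_ne_zero hp)
  have hXX (a b : ℤ) (w : A) : (↑(X ^ a) : A) * (↑(X ^ b) * w) = ↑(X ^ (a + b)) * w := by
    rw [← mul_assoc, ← Units.val_mul, ← zpow_add]
  simp only [virasoroL, mul_assoc]
  rw [hyZ.mul_mul_left, ← mul_assoc y, hid, add_sub_cancel_right]
  simp only [add_mul, mul_add, smul_mul_assoc, mul_smul_comm, mul_assoc,
    (hXZinv _).mul_mul_left, (hXZ.units_zpow_left hp _).mul_mul_left, hXX,
    Units.inv_mul_cancel_left, smul_add, smul_smul]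
  rw [show n + 1 + (m + 1) = n + m + 2 by ring, show n + 1 + m = n + m + 1 by ring]
  congr 2
  · rw [inv_zpow', neg_add, zpow_add₀ hp, zpow_neg_one]
    field_simp
  · rw [zpow_add_one₀ hp]
    ring

theorem pqNumber_virasoro_coeff (hp : p ≠ 0) (hq : q ≠ 0) (n m : ℤ) :
    p ^ (n - m) * (p ^ (m + 1) * pqNumber p q (m + 1))
      - q ^ (m - n) * (p ^ (n + 1) * pqNumber p q (n + 1)) = pqNumber p q (m - n) := by
  simp only [pqNumber, mul_div_assoc', ← sub_div]
  congr 1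
  simp only [neg_add, neg_sub, zpow_sub₀ hp, zpow_sub₀ hq, zpow_add₀ hp, zpow_add₀ hq, zpow_neg,
    zpow_one]
  field_simp
  ring

end

theorem two_param_virasoro_general {k A : Type*} [Field k] [Ring A] [Algebra k A]
    (p q : k) (hp : p ≠ 0) (hq : q ≠ 0)
    (X Z : Aˣ) (y : A)
    (hzx : (Z : A) * X = p⁻¹ • ((X : A) * Z))
    (hzy : (Z : A) * y = p • (y * Z))
    (hid : ∀ j : ℤ, y * ((X ^ j : Aˣ) : A)
      = q ^ j • (((X ^ j : Aˣ) : A) * y)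
        + ((q ^ j - p ^ (-j)) / (q - p⁻¹)) • (((X ^ (j - 1) : Aˣ) : A) * Z)) :
    ∀ n m : ℤ,
      letI L : ℤ → A := fun j => ((Z⁻¹ : Aˣ) : A) * ((X ^ (j + 1) : Aˣ) : A) * y
      p ^ (n - m) • (L n * L m) - q ^ (m - n) • (L m * L n)
        = ((q ^ (m - n) - p ^ (-(m - n))) / (q - p⁻¹)) • L (m + n) := by
  intro n m
  change p ^ (n - m) • (virasoroL X Z y n * virasoroL X Z y m)
      - q ^ (m - n) • (virasoroL X Z y m * virasoroL X Z y n)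
    = pqNumber p q (m - n) • virasoroL X Z y (m + n)
  have hcancel :
      p ^ (n - m) * (p ^ (-n) * q ^ (m + 1)) = q ^ (m - n) * (p ^ (-m) * q ^ (n + 1)) := by
    simp only [zpow_sub₀ hp, zpow_sub₀ hq, zpow_add₀ hq, zpow_neg, zpow_one]
    field_simp
  rw [virasoroL_mul_virasoroL hp hzx hzy hid, virasoroL_mul_virasoroL hp hzx hzy hid, smul_add,
    smul_add, smul_smul, smul_smul, smul_smul, smul_smul, hcancel, add_comm m n,
    add_sub_add_left_eq_sub, ← sub_smul, pqNumber_virasoro_coeff hp hq]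

/-- The elements `L_n = z⁻¹ x^{n+1} y` in the quotient ring of `A_p(r,s)` (any domain
with invertible `x, z` satisfying the relations of `H_{p,q}` together with the identity
`y x^j = q^j x^j y + [j]_{p,q} x^{j-1} z` for all `j ∈ ℤ`, where
`[j]_{p,q} = (q^j - p^{-j})/(q - p⁻¹)`) satisfy the two-parameter Virasoro relations
`p^{n-m} L_n L_m - q^{m-n} L_m L_n = [m-n]_{p,q} L_{m+n}`. -/
theorem two_param_virasoro {k A : Type*} [Field k] [Ring A] [Algebra k A]
    (p q : k) (hp : p ≠ 0) (hq : q ≠ 0) (hqp : q ≠ p⁻¹)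
    (X Z : Aˣ) (y : A)
    (hzx : (Z : A) * X = p⁻¹ • ((X : A) * Z))
    (hzy : (Z : A) * y = p • (y * Z))
    (hyx : y * X = q • ((X : A) * y) + Z)
    (hid : ∀ j : ℤ, y * ((X ^ j : Aˣ) : A)
      = q ^ j • (((X ^ j : Aˣ) : A) * y)
        + ((q ^ j - p ^ (-j)) / (q - p⁻¹)) • (((X ^ (j - 1) : Aˣ) : A) * Z)) :
    ∀ n m : ℤ,
      letI L : ℤ → A := fun j => ((Z⁻¹ : Aˣ) : A) * ((X ^ (j + 1) : Aˣ) : A) * y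
      p ^ (n - m) • (L n * L m) - q ^ (m - n) • (L m * L n)
        = ((q ^ (m - n) - p ^ (-(m - n))) / (q - p⁻¹)) • L (m + n) :=
  two_param_virasoro_general p q hp hq X Z y hzx hzy hid
end

section
/- Let B be the localization at powers of x of the quantum Weyl algebra k⟨x, Y | Yx = pq·xY + 1⟩ (with pq not a root of unity), and let M = B/B·Y with basis v_k = x^k + BY for k ∈ ℤ. Then M is a simple B-module: the action satisfies x^i v_k = v_{k+i}, Y·v_k = p^{k-1}[k]_{p,q} v_{k-1} for k ≥ 1, Y·v_0 = 0, Y·v_k = -p^{k+1}q^{-1}[-k]_{p,q} v_{k-1} for k ≤ -1, and every nonzero submodule equals M. -/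
/-!
On `v_j` with `j ≥ 1` the operator `x ∘ Y` acts by the scalar
`p^(j-1) [j]_{p,q} = p⁻¹ (1 + pq + ⋯ + (pq)^(j-1))`, and these scalars are pairwise distinct
because `pq` is not a root of unity. Shifting a nonzero vector of an invariant subspace by a power
of `x` until it is supported on indices `≥ 1` and then separating eigenvalues puts some `v_j` in
the subspace; `x^{±1}` carry it to every `v_i`.
-/

open Finset Module

section Eigenvalues

variable {k : Type*} [Field k]

theorem geom_sum_injective {K : Type*} [DivisionRing K] {a : K} (ha : a ≠ 0)
    (hfin : ¬IsOfFinOrder a) :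
    Function.Injective fun n : ℕ => ∑ i ∈ range n, a ^ i := by
  intro m n hmn
  have hpow : a ^ m = a ^ n := by
    have := congrArg (· * (a - 1)) hmn
    simpa only [geom_sum_mul, sub_left_inj] using this
  have hunit : ¬IsOfFinOrder (Units.mk0 a ha) := by rwa [← Units.isOfFinOrder_val]
  exact injective_pow_iff_not_isOfFinOrder.mpr hunit (Units.ext (by simpa using hpow))

theorem pow_mul_pqNum {p : k} (hp : p ≠ 0) (q : k) (n : ℕ) :
    p ^ n * pqNum p q n = ∑ i ∈ range n, (p * q) ^ i := by
  rw [pqNum, mul_sum]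
  refine sum_congr rfl fun i hi => ?_
  rw [← Nat.add_sub_cancel' (mem_range.mp hi).le, pow_add, Nat.add_sub_cancel_left, inv_pow,
    mul_pow]
  field_simp

def xYEigenvalue (p q : k) (j : ℤ) : k :=
  p ^ (j - 1) * pqNum p q j.toNat

theorem injOn_xYEigenvalue {p q : k} (hp : p ≠ 0) (hq : q ≠ 0) (hpq : ¬IsOfFinOrder (p * q)) :
    Set.InjOn (xYEigenvalue p q) (Set.Ici 0) := by
  intro i hi j hj hij
  have hnat : ∀ l : ℤ, 0 ≤ l → xYEigenvalue p q l = p⁻¹ * ∑ n ∈ range l.toNat, (p * q) ^ n := by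
    intro l hl
    rw [← pow_mul_pqNum hp, xYEigenvalue, zpow_sub_one₀ hp, ← Int.toNat_of_nonneg hl, zpow_natCast,
      Int.toNat_natCast]
    ring
  rw [hnat i hi, hnat j hj, mul_right_inj' (inv_ne_zero hp)] at hij
  have := geom_sum_injective (mul_ne_zero hp hq) hpq hij
  simp only [Set.mem_Ici] at hi hj
  omega

end Eigenvalues

section InvariantSubmodules

variable {R M : Type*}

theorem Submodule.smul_mem_of_sum_smul_mem_of_injOn [Field R] [AddCommGroup M] [Module R M]
    {ι : Type*} [DecidableEq ι] {N : Submodule R M} {T : End R M} (hT : N ∈ T.invtSubmodule)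
    {w : ι → M} {c : ι → R} {s : Finset ι} (hw : ∀ i ∈ s, T (w i) = c i • w i)
    (hc : Set.InjOn c s) {a : ι → R} (ha : ∑ i ∈ s, a i • w i ∈ N) :
    ∀ i ∈ s, a i • w i ∈ N := by
  induction s using Finset.induction_on generalizing a with
  | empty => simp
  | insert i₀ s hi₀ ih =>
    rw [sum_insert hi₀] at ha
    have hw' : ∀ i ∈ s, T (w i) = c i • w i := fun i hi => hw i (mem_insert_of_mem hi)
    -- `T - c i₀` kills the `i₀`-term and rescales the others by nonzero factors.
    have hsep : ∑ i ∈ s, ((c i - c i₀) * a i) • w i ∈ N := by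
      have hdiff := N.sub_mem (hT ha) (N.smul_mem (c i₀) ha)
      convert hdiff using 1
      have hTs : ∀ i ∈ s, T (a i • w i) = (c i * a i) • w i := fun i hi => by
        rw [map_smul, hw' i hi, smul_smul, mul_comm]
      rw [map_add, map_sum, sum_congr rfl hTs, map_smul, hw i₀ (mem_insert_self i₀ s), smul_add,
        smul_sum, smul_smul, mul_comm (a i₀)]
      simp only [sub_mul, sub_smul, sum_sub_distrib, smul_smul]
      abel
    have hs : ∀ i ∈ s, a i • w i ∈ N := by
      intro i hi
      have hne : c i - c i₀ ≠ 0 := sub_ne_zero.mpr fun h =>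
        hi₀ (hc (mem_insert_of_mem hi) (mem_insert_self i₀ s) h ▸ hi)
      have := ih hw' (hc.mono (by simp)) hsep i hi
      rwa [mul_smul, N.smul_mem_iff hne] at this
    refine forall_mem_insert _ _ _ |>.mpr ⟨?_, hs⟩
    simpa using N.sub_mem ha (N.sum_mem hs)

variable [Semiring R] [AddCommMonoid M] [Module R M] {v : ℤ → M} {N : Submodule R M}
  {X : End R M}

theorem Submodule.sum_smul_shift_mem (hXN : N ∈ X.invtSubmodule) (hX : ∀ j, X (v j) = v (j + 1))
    {s : Finset ℤ} {a : ℤ → R} (ha : ∑ j ∈ s, a j • v j ∈ N) (t : ℕ) :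
    ∑ j ∈ s, a j • v (j + t) ∈ N := by
  induction t with
  | zero => simpa using ha
  | succ t ih =>
    simpa only [Submodule.mem_comap, map_sum, map_smul, hX, Nat.cast_succ, add_assoc] using hXN ih

theorem Submodule.eq_top_of_shift_invariant (hspan : span R (Set.range v) = ⊤) {Xinv : End R M}
    (hXN : N ∈ X.invtSubmodule) (hXinvN : N ∈ Xinv.invtSubmodule)
    (hX : ∀ j, X (v j) = v (j + 1)) (hXinv : ∀ j, Xinv (v j) = v (j - 1)) {i : ℤ} (hi : v i ∈ N) :
    N = ⊤ := by
  have hall : ∀ j, v j ∈ N := fun j =>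
    Int.inductionOn' j i hi (fun j _ hj => hX j ▸ hXN hj) (fun j _ hj => hXinv j ▸ hXinvN hj)
  rw [eq_top_iff, ← hspan, span_le]
  rintro _ ⟨j, rfl⟩
  exact hall j

end InvariantSubmodules

theorem quantum_weyl_module_simple_general {k M : Type*} [Field k]
    [AddCommGroup M] [Module k M]
    (p q : k) (hp : p ≠ 0) (hq : q ≠ 0)
    (hpq : ∀ m : ℕ, 0 < m → (p * q) ^ m ≠ 1)
    (v : ℤ → M)
    (hspan : Submodule.span k (Set.range v) = ⊤)
    (Xop Xinv Yop : M →ₗ[k] M)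
    (hX : ∀ j : ℤ, Xop (v j) = v (j + 1))
    (hXinv : ∀ j : ℤ, Xinv (v j) = v (j - 1))
    (hYpos : ∀ j : ℤ, 1 ≤ j → Yop (v j) = (p ^ (j - 1) * pqNum p q j.toNat) • v (j - 1)) :
    ∀ N : Submodule k M,
      (∀ m ∈ N, Xop m ∈ N ∧ Xinv m ∈ N ∧ Yop m ∈ N) → N ≠ ⊥ → N = ⊤ := by
  intro N hN hN0
  have hXN : N ∈ End.invtSubmodule Xop := fun m hm => (hN m hm).1
  have hXinvN : N ∈ End.invtSubmodule Xinv := fun m hm => (hN m hm).2.1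
  have hXYN : N ∈ End.invtSubmodule (Xop ∘ₗ Yop) := fun m hm => hXN (hN m hm).2.2
  have hXY : ∀ j, 1 ≤ j → (Xop ∘ₗ Yop) (v j) = xYEigenvalue p q j • v j := fun j hj => by
    rw [LinearMap.comp_apply, hYpos j hj, map_smul, hX, sub_add_cancel, xYEigenvalue]
  obtain ⟨m, hmN, hm0⟩ := N.exists_mem_ne_zero_of_ne_bot hN0
  obtain ⟨f, rfl⟩ := Finsupp.mem_span_range_iff_exists_finsupp.mp (hspan ▸ Submodule.mem_top :
    m ∈ Submodule.span k (Set.range v))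
  obtain ⟨i, hi⟩ : f.support.Nonempty :=
    Finsupp.support_nonempty_iff.mpr fun hf => hm0 (by simp [hf])
  obtain ⟨b, hb⟩ := f.support.bddBelow
  obtain ⟨t, ht⟩ : ∃ t : ℕ, ∀ j ∈ f.support, 1 ≤ j + t := ⟨(1 - b).toNat, fun j hj => by
    have := hb hj
    omega⟩
  have hpq' : ¬IsOfFinOrder (p * q) := by simpa [isOfFinOrder_iff_pow_eq_one] using hpq
  have hterm := Submodule.smul_mem_of_sum_smul_mem_of_injOn hXYN
    (c := xYEigenvalue p q ∘ (· + (t : ℤ))) (fun j hj => hXY _ (ht j hj))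
    ((injOn_xYEigenvalue hp hq hpq').comp (add_left_injective _).injOn
      fun j hj => zero_le_one.trans (ht j hj))
    (Submodule.sum_smul_shift_mem hXN hX hmN t) i hi
  rw [N.smul_mem_iff (Finsupp.mem_support_iff.mp hi)] at hterm
  exact Submodule.eq_top_of_shift_invariant hspan hXN hXinvN hX hXinv hterm

/-- Let `B` be the localization at powers of `x` of the quantum Weyl algebra
`k⟨x, Y | Yx = pq·xY + 1⟩`, with `pq` (and `p`) not a root of unity, and let
`M = B/B·Y`, with basis `v_k = x^k + BY` (`k ∈ ℤ`), on which
`x^i v_k = v_{k+i}`, `Y v_k = p^{k-1}[k]_{p,q} v_{k-1}` for `k ≥ 1`, `Y v_0 = 0`,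
and `Y v_k = -p^{k+1} q⁻¹ [-k]_{p,q} v_{k-1}` for `k ≤ -1`.
Then `M` is a simple `B`-module: every nonzero subspace invariant under the action
of `x`, `x⁻¹` and `Y` is all of `M`. -/
theorem quantum_weyl_module_simple {k M : Type*} [Field k]
    [AddCommGroup M] [Module k M]
    (p q : k) (hp : p ≠ 0) (hq : q ≠ 0)
    (hpq : ∀ m : ℕ, 0 < m → (p * q) ^ m ≠ 1)
    (hp' : ∀ m : ℕ, 0 < m → p ^ m ≠ 1)
    (v : ℤ → M) (hind : LinearIndependent k v)
    (hspan : Submodule.span k (Set.range v) = ⊤)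
    (Xop Xinv Yop : M →ₗ[k] M)
    (hX : ∀ j : ℤ, Xop (v j) = v (j + 1))
    (hXinv : ∀ j : ℤ, Xinv (v j) = v (j - 1))
    (hYpos : ∀ j : ℤ, 1 ≤ j → Yop (v j) = (p ^ (j - 1) * pqNum p q j.toNat) • v (j - 1))
    (hY0 : Yop (v 0) = 0)
    (hYneg : ∀ j : ℤ, j ≤ -1 →
      Yop (v j) = (-(p ^ (j + 1) * q⁻¹ * pqNum p q (-j).toNat)) • v (j - 1)) :
    ∀ N : Submodule k M,
      (∀ m ∈ N, Xop m ∈ N ∧ Xinv m ∈ N ∧ Yop m ∈ N) → N ≠ ⊥ → N = ⊤ :=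
  quantum_weyl_module_simple_general p q hp hq hpq v hspan Xop Xinv Yop hX hXinv hYpos
end
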